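/- For all integers n ≥ 0 and k ≥ 1, every sequence of real numbers ᾱ = (α₀, α₁, …, α_{n−1}), all nonzero real numbers ℓ₁, …, ℓ_k, and every real number z, the multiparameter poly-Cauchy polynomials of the second kind satisfy Ĉ_{n,L}^{(k)}(z;ᾱ) = Σ_{i=0}^{n} Σ_{m=i}^{n} (−1)^{i+n} binom(m,i) |s_ᾱ(n,m)| (ℓ₁ℓ₂⋯ℓ_k)^{m−i+1} / (m−i+1)^k · z^i. -/

import Mathlib

/-!
Since (-1)ⁿ ∏ (-t - αᵢ + z) = ∏ ((t - z) + αᵢ) = Σₘ |s_ᾱ(n,m)| (t - z)ᵐ, the binomial theorem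
makes the integrand a polynomial in t = x₁⋯x_k, and each monomial tᵉ integrates to
(ℓ₁⋯ℓ_k)^(e+1) / (e+1)^k.
-/

open Finset

/-- Iterated integral ∫₀^{ℓ₁}⋯∫₀^{ℓ_k} f(x₁x₂⋯x_k) dx₁⋯dx_k over the list of bounds. -/
noncomputable def iterInt : List ℝ → (ℝ → ℝ) → ℝ
  | [], f => f 1
  | l :: ls, f => ∫ x in (0:ℝ)..l, iterInt ls (fun y => f (x * y))

theorem iterInt_sum_mul_pow {ι : Type*} (s : Finset ι) (e : ι → ℕ) :
    ∀ (ls : List ℝ) (c : ι → ℝ), iterInt ls (fun t => ∑ a ∈ s, c a * t ^ e a) =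
      ∑ a ∈ s, c a * ls.prod ^ (e a + 1) / ((e a : ℝ) + 1) ^ ls.length
  | [], c => by simp [iterInt]
  | l :: ls, c => by
    have inner (x : ℝ) : iterInt ls (fun y => ∑ a ∈ s, c a * (x * y) ^ e a) =
        ∑ a ∈ s, c a * ls.prod ^ (e a + 1) / ((e a : ℝ) + 1) ^ ls.length * x ^ e a := by
      have regroup : (fun y => ∑ a ∈ s, c a * (x * y) ^ e a) =
          fun y => ∑ a ∈ s, (c a * x ^ e a) * y ^ e a := by
        simp_rw [mul_pow, mul_assoc]
      rw [regroup, iterInt_sum_mul_pow s e ls]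
      exact sum_congr rfl fun a _ => by ring
    simp only [iterInt, inner]
    rw [intervalIntegral.integral_finsetSum fun a _ =>
      ((continuous_pow _).const_mul _).intervalIntegrable _ _]
    refine sum_congr rfl fun a _ => ?_
    rw [intervalIntegral.integral_const_mul, integral_pow, List.prod_cons, List.length_cons,
      zero_pow (Nat.succ_ne_zero _)]
    field_simp
    ring

theorem prod_neg_sub_add_eq_sum {R : Type*} [CommRing R] (n : ℕ) (α : ℕ → R) (sabs : ℕ → R)
    (hsabs : ∀ x : R, ∏ i ∈ range n, (x + α i) = ∑ m ∈ range (n + 1), sabs m * x ^ m)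
    (t z : R) :
    ∏ i ∈ range n, (-t - α i + z) =
      ∑ i ∈ range (n + 1), ∑ m ∈ Icc i n,
        (-1) ^ (i + n) * (m.choose i : R) * sabs m * z ^ i * t ^ (m - i) := by
  calc ∏ i ∈ range n, (-t - α i + z)
      = ∏ i ∈ range n, (-1) * ((t - z) + α i) := prod_congr rfl fun _ _ => by ring
    _ = (-1) ^ n * ∑ m ∈ range (n + 1), sabs m * (-z + t) ^ m := by
      rw [prod_mul_distrib, prod_const, card_range, hsabs, neg_add_eq_sub]
    _ = ∑ m ∈ range (n + 1), ∑ i ∈ range (m + 1),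
          (-1) ^ (i + n) * (m.choose i : R) * sabs m * z ^ i * t ^ (m - i) := by
      simp_rw [add_pow, mul_sum]
      refine sum_congr rfl fun m _ => sum_congr rfl fun i _ => ?_
      rw [neg_pow, pow_add]
      ring
    _ = _ := by
      simp_rw [← Nat.Ico_zero_eq_range, ← Ico_add_one_right_eq_Icc]
      exact (sum_Ico_Ico_comm _ _ _).symm

theorem stmt15_general (n k : ℕ) (α : ℕ → ℝ) (L : Fin k → ℝ)
    (z : ℝ) (sabs : ℕ → ℝ)
    (hsabs : ∀ x : ℝ, ∏ i ∈ range n, (x + α i) = ∑ m ∈ range (n + 1), sabs m * x ^ m) :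
    iterInt (List.ofFn L) (fun t => ∏ i ∈ range n, (-t - α i + z)) =
      ∑ i ∈ range (n + 1), ∑ m ∈ Icc i n,
        (-1 : ℝ) ^ (i + n) * (m.choose i : ℝ) * sabs m *
          (∏ j, L j) ^ (m - i + 1) / (((m - i : ℕ) : ℝ) + 1) ^ k * z ^ i := by
  simp_rw [prod_neg_sub_add_eq_sum n α sabs hsabs, sum_sigma']
  rw [iterInt_sum_mul_pow, List.prod_ofFn, List.length_ofFn]
  exact sum_congr rfl fun _ _ => by ring

theorem stmt15 (n k : ℕ) (hk : 1 ≤ k) (α : ℕ → ℝ) (L : Fin k → ℝ)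
    (hL : ∀ i, L i ≠ 0) (z : ℝ) (sabs : ℕ → ℝ)
    (hsabs : ∀ x : ℝ, ∏ i ∈ range n, (x + α i) = ∑ m ∈ range (n + 1), sabs m * x ^ m) :
    iterInt (List.ofFn L) (fun t => ∏ i ∈ range n, (-t - α i + z)) =
      ∑ i ∈ range (n + 1), ∑ m ∈ Icc i n,
        (-1 : ℝ) ^ (i + n) * (m.choose i : ℝ) * sabs m *
          (∏ j, L j) ^ (m - i + 1) / (((m - i : ℕ) : ℝ) + 1) ^ k * z ^ i :=
  stmt15_general n k α L z sabs hsabs
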